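/- arXiv:math/0203211 — 4 statements merged into one kernel-verified Lean document; each statement's English description precedes it below -/
import Mathlib

section
/- The matrix C₀+C₁ ∈ M_{ℓ+1}(ℝ) defined by (C₀+C₁)_{i,i-1} = i(ℓ-i+1), (C₀+C₁)_{i,i} = -(i(ℓ-i+1)+(i+1)(ℓ-i)), (C₀+C₁)_{i,i+1} = (i+1)(ℓ-i) (indices 0 ≤ i ≤ ℓ, all other entries zero) has eigenvalues -j(j+1) for 0 ≤ j ≤ ℓ, with eigenvector u_j whose i-th entry is u_{i,j} = ∑_{m=0}^{min(i,j)} ((-j)_m (-i)_m (j+1)_m) / ((1)_m (-ℓ)_m m!), i.e. the Hahn polynomial Q_j(i;0,0,ℓ+1) evaluated at i. -/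
/-- Pochhammer symbol `(a)_m = a (a+1) ⋯ (a+m-1)` for real `a`. -/
def poch (a : ℝ) (m : ℕ) : ℝ := ∏ r ∈ Finset.range m, (a + r)

/-- falling factorial `x(x-1)⋯(x-m+1)` -/
def pfall (m : ℕ) (x : ℝ) : ℝ := ∏ r ∈ Finset.range m, (x - r)

noncomputable def acoef (ℓ j m : ℕ) : ℝ :=
  (-1)^m * (poch (-(j:ℝ)) m * poch ((j:ℝ)+1) m) /
    (poch 1 m * poch (-(ℓ:ℝ)) m * (Nat.factorial m : ℝ))

noncomputable def Sfun (ℓ j : ℕ) (x : ℝ) : ℝ :=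
  ∑ m ∈ Finset.range (j+1), acoef ℓ j m * pfall m x

lemma poch_succ (a : ℝ) (m : ℕ) : poch a (m+1) = poch a m * (a + m) :=
  Finset.prod_range_succ _ _

lemma poch_zero (a : ℝ) : poch a 0 = 1 := rfl

lemma pfall_zero (x : ℝ) : pfall 0 x = 1 := rfl

lemma pfall_succ (m : ℕ) (x : ℝ) : pfall (m+1) x = pfall m x * (x - m) :=
  Finset.prod_range_succ _ _

lemma pfall_succ' (m : ℕ) (x : ℝ) : pfall (m+1) x = x * pfall m (x-1) := by
  rw [pfall, Finset.prod_range_succ']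
  simp only [Nat.cast_zero, sub_zero, pfall]
  rw [mul_comm]
  congr 1
  apply Finset.prod_congr rfl
  intro r _
  push_cast
  ring

lemma pfall_nat_eq_zero {i m : ℕ} (h : i < m) : pfall m ((i:ℕ):ℝ) = 0 := by
  apply Finset.prod_eq_zero (Finset.mem_range.mpr h)
  simp

lemma poch_neg_nat (n m : ℕ) : poch (-(n:ℝ)) m = (-1)^m * pfall m n := by
  induction m with
  | zero => simp [poch, pfall]
  | succ k ih => rw [poch_succ, pfall_succ, ih]; ring

lemma poch_one_pos (m : ℕ) : 0 < poch 1 m := by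
  apply Finset.prod_pos
  intro r _
  positivity

lemma poch_neg_nat_ne_zero {ℓ m : ℕ} (h : m ≤ ℓ) : poch (-(ℓ:ℝ)) m ≠ 0 := by
  rw [poch, Finset.prod_ne_zero_iff]
  intro r hr
  rw [Finset.mem_range] at hr
  have : r < ℓ := lt_of_lt_of_le hr h
  have : ((r:ℝ)) < (ℓ:ℝ) := by exact_mod_cast this
  intro hc
  linarith

lemma acoef_ratio {ℓ j m : ℕ} (hm : m < ℓ) :
    ((m:ℝ)+1)^2 * ((ℓ:ℝ) - m) * acoef ℓ j (m+1) =
      ((m:ℝ)-j)*((m:ℝ)+j+1) * acoef ℓ j m := by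
  have h1 := (poch_one_pos m).ne'
  have h2 := poch_neg_nat_ne_zero (le_of_lt hm)
  have h3 : ((Nat.factorial m : ℝ)) ≠ 0 := by exact_mod_cast m.factorial_ne_zero
  have h4 := (poch_one_pos (m+1)).ne'
  have h5 := poch_neg_nat_ne_zero (Nat.succ_le_of_lt hm)
  have h6 : ((Nat.factorial (m+1) : ℝ)) ≠ 0 := by exact_mod_cast (m+1).factorial_ne_zero
  have hD : poch 1 m * poch (-(ℓ:ℝ)) m * (Nat.factorial m : ℝ) ≠ 0 :=
    mul_ne_zero (mul_ne_zero h1 h2) h3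
  have hD' : poch 1 m * (1 + (m:ℝ)) * (poch (-(ℓ:ℝ)) m * (-(ℓ:ℝ) + m)) *
      (((m:ℝ) + 1) * (Nat.factorial m : ℝ)) ≠ 0 := by
    have hm1 : (1 + (m:ℝ)) ≠ 0 := by positivity
    have hm1' : ((m:ℝ) + 1) ≠ 0 := by positivity
    have hml : (-(ℓ:ℝ) + m) ≠ 0 := by
      have : (m:ℝ) < (ℓ:ℝ) := by exact_mod_cast hm
      intro hc; linarith
    exact mul_ne_zero (mul_ne_zero (mul_ne_zero h1 hm1) (mul_ne_zero h2 hml))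
      (mul_ne_zero hm1' h3)
  rw [acoef, acoef, poch_succ, poch_succ, poch_succ, poch_succ, Nat.factorial_succ]
  push_cast
  rw [mul_div_assoc', mul_div_assoc', div_eq_div_iff hD' hD]
  ring

lemma Lp (c : ℝ) (m : ℕ) (x : ℝ) :
    x*(c-x+1)*(pfall (m+1) (x-1) - pfall (m+1) x) +
      (x+1)*(c-x)*(pfall (m+1) (x+1) - pfall (m+1) x)
    = -(((m:ℝ)+1)*((m:ℝ)+2)) * pfall (m+1) x + ((m:ℝ)+1)^2*(c-(m:ℝ)) * pfall m x := by
  have h1 : pfall (m+1) (x-1) = pfall m (x-1) * (x-1-m) := pfall_succ m (x-1)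
  have h3 : pfall (m+1) (x+1) = (x+1) * pfall m x := by
    have := pfall_succ' m (x+1); simpa using this
  have h2' : pfall (m+1) x = pfall m x * (x-m) := pfall_succ m x
  have hAB : x * pfall m (x-1) = pfall m x * (x - m) := by
    rw [← pfall_succ' m x, h2']
  rw [h1, h3, h2']
  linear_combination (c-x+1)*(x-1-(m:ℝ)) * hAB

lemma key (ℓ j : ℕ) (hj : j ≤ ℓ) (x : ℝ) :
    x*((ℓ:ℝ)-x+1)*(Sfun ℓ j (x-1) - Sfun ℓ j x) +
      (x+1)*((ℓ:ℝ)-x)*(Sfun ℓ j (x+1) - Sfun ℓ j x)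
    = -((j:ℝ)*((j:ℝ)+1)) * Sfun ℓ j x := by
  set c : ℝ := (ℓ:ℝ)
  have expand : x*(c-x+1)*(Sfun ℓ j (x-1) - Sfun ℓ j x) +
      (x+1)*(c-x)*(Sfun ℓ j (x+1) - Sfun ℓ j x)
      = ∑ m ∈ Finset.range (j+1), acoef ℓ j m *
          (x*(c-x+1)*(pfall m (x-1) - pfall m x) +
            (x+1)*(c-x)*(pfall m (x+1) - pfall m x)) := by
    unfold Sfun
    rw [← Finset.sum_sub_distrib, ← Finset.sum_sub_distrib, Finset.mul_sum, Finset.mul_sum,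
      ← Finset.sum_add_distrib]
    exact Finset.sum_congr rfl fun m _ => by ring
  rw [expand, Finset.sum_range_succ']
  have h0 : acoef ℓ j 0 * (x*(c-x+1)*(pfall 0 (x-1) - pfall 0 x) +
      (x+1)*(c-x)*(pfall 0 (x+1) - pfall 0 x)) = 0 := by
    simp [pfall_zero]
  rw [h0, add_zero]
  have step : ∀ m ∈ Finset.range j, acoef ℓ j (m+1) *
      (x*(c-x+1)*(pfall (m+1) (x-1) - pfall (m+1) x) +
        (x+1)*(c-x)*(pfall (m+1) (x+1) - pfall (m+1) x))
      = -(((m:ℝ)+1)*((m:ℝ)+2)) * (acoef ℓ j (m+1) * pfall (m+1) x)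
        + ((m:ℝ)-j)*((m:ℝ)+j+1) * (acoef ℓ j m * pfall m x) := by
    intro m hm
    rw [Lp c m x]
    have hr : ((m:ℝ)+1)^2 * (c - m) * acoef ℓ j (m+1) =
        ((m:ℝ)-j)*((m:ℝ)+j+1) * acoef ℓ j m :=
      acoef_ratio (lt_of_lt_of_le (Finset.mem_range.mp hm) hj)
    linear_combination pfall m x * hr
  rw [Finset.sum_congr rfl step, Finset.sum_add_distrib]
  -- now handle the two sums
  have reindex : ∑ m ∈ Finset.range j,
      -(((m:ℝ)+1)*((m:ℝ)+2)) * (acoef ℓ j (m+1) * pfall (m+1) x)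
      = ∑ m ∈ Finset.range (j+1), -((m:ℝ)*((m:ℝ)+1)) * (acoef ℓ j m * pfall m x) := by
    rw [Finset.sum_range_succ']
    have hz : -(((0:ℕ):ℝ)*(((0:ℕ):ℝ)+1)) * (acoef ℓ j 0 * pfall 0 x) = 0 := by simp
    rw [hz, add_zero]
    exact Finset.sum_congr rfl fun m _ => by push_cast; ring
  rw [reindex]
  rw [Finset.sum_range_succ (fun m => -((m:ℝ)*((m:ℝ)+1)) * (acoef ℓ j m * pfall m x)) j]
  unfold Sfun
  rw [Finset.sum_range_succ]
  have final : ∑ m ∈ Finset.range j, ((m:ℝ)-j)*((m:ℝ)+j+1) * (acoef ℓ j m * pfall m x)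
      + (∑ m ∈ Finset.range j, -((m:ℝ)*((m:ℝ)+1)) * (acoef ℓ j m * pfall m x))
      = -((j:ℝ)*((j:ℝ)+1)) * ∑ m ∈ Finset.range j, acoef ℓ j m * pfall m x := by
    rw [Finset.mul_sum, ← Finset.sum_add_distrib]
    exact Finset.sum_congr rfl fun m _ => by ring
  linear_combination final

lemma u_eq_S (ℓ j i : ℕ) (hj : j ≤ ℓ) :
    (∑ m ∈ Finset.range (min i j + 1),
        poch (-(j:ℝ)) m * poch (-(i:ℝ)) m * poch ((j:ℝ) + 1) m /
          (poch 1 m * poch (-(ℓ:ℝ)) m * (Nat.factorial m : ℝ)))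
    = Sfun ℓ j (i:ℝ) := by
  have hterm : ∀ m : ℕ, poch (-(j:ℝ)) m * poch (-(i:ℝ)) m * poch ((j:ℝ) + 1) m /
      (poch 1 m * poch (-(ℓ:ℝ)) m * (Nat.factorial m : ℝ))
      = acoef ℓ j m * pfall m (i:ℝ) := by
    intro m
    rw [acoef, poch_neg_nat i m]
    ring
  rw [Finset.sum_congr rfl fun m _ => hterm m]
  unfold Sfun
  apply Finset.sum_subset
  · intro m hm
    rw [Finset.mem_range] at *
    omega
  · intro m hm hm'
    rw [Finset.mem_range] at *
    have hi : i < m := by omega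
    rw [pfall_nat_eq_zero hi, mul_zero]

lemma row_sum (N x : ℕ) (hx : x < N) (c₁ c₂ c₃ : ℝ) (v : ℕ → ℝ)
    (h1 : x = 0 → c₁ = 0) (h3 : x + 1 = N → c₃ = 0) :
    (∑ n ∈ Finset.range N,
      (if n + 1 = x then c₁ else if n = x then c₂ else if n = x + 1 then c₃ else 0) * v n)
    = c₁ * v (x - 1) + c₂ * v x + c₃ * v (x + 1) := by
  have split : ∀ n, (if n + 1 = x then c₁ else if n = x then c₂
        else if n = x + 1 then c₃ else 0) * v n
      = (if n + 1 = x then c₁ * v n else 0) + (if n = x then c₂ * v n else 0)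
        + (if n = x + 1 then c₃ * v n else 0) := by
    intro n
    split_ifs <;> try ring
    all_goals exfalso; omega
  rw [Finset.sum_congr rfl fun n _ => split n, Finset.sum_add_distrib,
    Finset.sum_add_distrib]
  have hB : (∑ n ∈ Finset.range N, if n = x then c₂ * v n else 0) = c₂ * v x := by
    rw [Finset.sum_ite_eq' (Finset.range N) x (fun n => c₂ * v n),
      if_pos (Finset.mem_range.mpr hx)]
  have hA : (∑ n ∈ Finset.range N, if n + 1 = x then c₁ * v n else 0) = c₁ * v (x - 1) := by
    rcases x with _ | s
    · simp [h1 rfl]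
    · have : ∀ n, (if n + 1 = s + 1 then c₁ * v n else 0) = (if n = s then c₁ * v n else 0) := by
        intro n; congr 1; simp
      rw [Finset.sum_congr rfl fun n _ => this n,
        Finset.sum_ite_eq' (Finset.range N) s (fun n => c₁ * v n),
        if_pos (Finset.mem_range.mpr (by omega))]
      simp
  have hC : (∑ n ∈ Finset.range N, if n = x + 1 then c₃ * v n else 0) = c₃ * v (x + 1) := by
    rw [Finset.sum_ite_eq' (Finset.range N) (x+1) (fun n => c₃ * v n)]
    rcases Nat.lt_or_ge (x+1) N with h | h
    · rw [if_pos (Finset.mem_range.mpr h)]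
    · have hxN : x + 1 = N := by omega
      rw [if_neg (by simp; omega), h3 hxN, zero_mul]
  rw [hA, hB, hC]

/-- The matrix `C₀ + C₁` with entries `(C₀+C₁)_{i,i-1} = i(ℓ-i+1)`,
`(C₀+C₁)_{i,i} = -(i(ℓ-i+1)+(i+1)(ℓ-i))`, `(C₀+C₁)_{i,i+1} = (i+1)(ℓ-i)` has
eigenvalues `-j(j+1)` for `0 ≤ j ≤ ℓ`, with eigenvector `u_j` given by Hahn
polynomials `u_{i,j} = ₃F₂(-j,-i,j+1; 1,-ℓ; 1)`. -/
theorem stmt0 (ℓ : ℕ)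
    (C : Matrix (Fin (ℓ + 1)) (Fin (ℓ + 1)) ℝ)
    (hC : ∀ i k : Fin (ℓ + 1), C i k =
      if (k : ℕ) + 1 = (i : ℕ) then (i : ℝ) * ((ℓ : ℝ) - (i : ℕ) + 1)
      else if (k : ℕ) = (i : ℕ) then
        -((i : ℝ) * ((ℓ : ℝ) - (i : ℕ) + 1) + (((i : ℕ) : ℝ) + 1) * ((ℓ : ℝ) - (i : ℕ)))
      else if (k : ℕ) = (i : ℕ) + 1 then (((i : ℕ) : ℝ) + 1) * ((ℓ : ℝ) - (i : ℕ))
      else 0)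
    (u : Fin (ℓ + 1) → Fin (ℓ + 1) → ℝ)
    (hu : ∀ i j : Fin (ℓ + 1), u i j =
      ∑ m ∈ Finset.range (min (i : ℕ) (j : ℕ) + 1),
        poch (-((j : ℕ) : ℝ)) m * poch (-((i : ℕ) : ℝ)) m * poch (((j : ℕ) : ℝ) + 1) m /
          (poch 1 m * poch (-(ℓ : ℝ)) m * (Nat.factorial m : ℝ))) :
    ∀ j : Fin (ℓ + 1),
      C.mulVec (fun i => u i j) = (-(((j : ℕ) : ℝ) * (((j : ℕ) : ℝ) + 1))) • (fun i => u i j) ∧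
      (fun i => u i j) ≠ 0 := by
  intro j
  have hjℓ : (j:ℕ) ≤ ℓ := Nat.lt_succ_iff.mp j.isLt
  have hv : ∀ k : Fin (ℓ+1), u k j = Sfun ℓ (j:ℕ) (((k:ℕ)):ℝ) := by
    intro k; rw [hu]; exact u_eq_S ℓ (j:ℕ) (k:ℕ) hjℓ
  constructor
  · funext i
    have hsum : (C.mulVec (fun i => u i j)) i
        = ∑ n ∈ Finset.range (ℓ+1), (fun n : ℕ =>
            (if n + 1 = (i:ℕ) then ((i:ℕ):ℝ) * ((ℓ:ℝ) - ((i:ℕ):ℝ) + 1)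
             else if n = (i:ℕ) then
               -(((i:ℕ):ℝ) * ((ℓ:ℝ) - ((i:ℕ):ℝ) + 1) + (((i:ℕ):ℝ)+1) * ((ℓ:ℝ) - ((i:ℕ):ℝ)))
             else if n = (i:ℕ) + 1 then (((i:ℕ):ℝ)+1) * ((ℓ:ℝ) - ((i:ℕ):ℝ))
             else 0) * Sfun ℓ (j:ℕ) ((n:ℕ):ℝ)) n := by
      rw [← Fin.sum_univ_eq_sum_range]
      simp only [Matrix.mulVec, dotProduct]
      apply Finset.sum_congr rfl
      intro k _
      rw [hC i k, hv k]
    rw [hsum]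
    rw [row_sum (ℓ+1) (i:ℕ) i.isLt _ _ _ _
      (by intro h; rw [h]; norm_num)
      (by intro h; have : (i:ℕ) = ℓ := by omega
          rw [this]; norm_num)]
    have hrhs : ((-(((j:ℕ):ℝ) * (((j:ℕ):ℝ) + 1))) • (fun i => u i j)) i
        = -(((j:ℕ):ℝ) * (((j:ℕ):ℝ) + 1)) * Sfun ℓ (j:ℕ) (((i:ℕ)):ℝ) := by
      simp [hv i]
    rw [hrhs]
    rcases Nat.eq_zero_or_pos (i:ℕ) with h0 | hpos
    · rw [h0]
      norm_num
      have k0 := key ℓ (j:ℕ) hjℓ 0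
      push_cast at k0 ⊢
      norm_num at k0 ⊢
      linear_combination k0
    · have hc1 : (((i:ℕ) - 1 : ℕ):ℝ) = ((i:ℕ):ℝ) - 1 := by
        rw [Nat.cast_sub hpos]; norm_num
      rw [hc1]
      have kx := key ℓ (j:ℕ) hjℓ (((i:ℕ)):ℝ)
      push_cast at kx ⊢
      linear_combination kx
  · intro hcontra
    have h0 := congrFun hcontra ⟨0, Nat.succ_pos ℓ⟩
    rw [hu] at h0
    simp [poch] at h0
end

section
/- If x = (x₀,…,x_ℓ) ∈ ℂ^{ℓ+1} satisfies 4i(ℓ+1-i)x_{i-1} = (μ_k - μ_i)x_i for all 1 ≤ i ≤ ℓ (the eigenvector equations for L(p) with eigenvalue μ_k), and if k is the largest index with this eigenvalue, then x_i = 0 for 0 ≤ i < k, and x is determined by x_k; moreover the vector v_k with v_{i,k}=0 for i<k, v_{k,k}=1, and v_{k+j,k} = ∏_{i=1}^{j} ((k+i)(ℓ+1-i-k))/(i(ℓ+1-2p-2k-i)) for 1 ≤ j ≤ ℓ-k satisfies these equations, provided ℓ+1-2p-2k-i ≠ 0 for 1 ≤ i ≤ ℓ-k. -/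
/-!
The recursion has the form `a i * x (i - 1) = b i * x i` with `a i = 4 i (ℓ + 1 - i)` nonzero on
`1 ≤ i ≤ ℓ` and `b i = μ_k - μ_i = 4 (i - k) (ℓ + 1 - 2p - k - i)`, which vanishes at `i = k` and,
by the assumption on the denominators, nowhere on `k < i ≤ ℓ`. Read downwards from `i = k`, the
recursion forces `x i = 0` for `i < k`; read upwards, it determines `x i` from `x (i - 1)` for
`k < i ≤ ℓ`, and `v_k` is the solution normalised by `v_k k = 1`, with factors `a i / b i`.
-/

open Finset

section TwoTermRecursion

variable {K : Type*} [Field K] (a b : ℕ → K)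

def SolvesRecursion (x : ℕ → K) (n : ℕ) : Prop :=
  ∀ i, 1 ≤ i → i ≤ n → a i * x (i - 1) = b i * x i

def recursionSolution (k i : ℕ) : K :=
  if i < k then 0 else ∏ m ∈ range (i - k), a (k + m + 1) / b (k + m + 1)

variable {a b}

theorem recursionSolution_of_lt {k i : ℕ} (h : i < k) : recursionSolution a b k i = 0 :=
  if_pos h

theorem recursionSolution_self (k : ℕ) : recursionSolution a b k k = 1 := by
  simp [recursionSolution]

theorem recursionSolution_succ {k i : ℕ} (h : k ≤ i) :
    recursionSolution a b k (i + 1) = recursionSolution a b k i * (a (i + 1) / b (i + 1)) := by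
  obtain ⟨j, rfl⟩ := Nat.exists_eq_add_of_le h
  rw [recursionSolution, recursionSolution, if_neg (by omega), if_neg (by omega),
    show k + j + 1 - k = j + 1 by omega, Nat.add_sub_cancel_left, prod_range_succ, add_right_comm]

theorem solvesRecursion_recursionSolution {k n : ℕ} (hbk : b k = 0)
    (hb : ∀ i, k < i → i ≤ n → b i ≠ 0) : SolvesRecursion a b (recursionSolution a b k) n := by
  intro i hi hin
  rcases lt_trichotomy i k with hik | rfl | hki
  · rw [recursionSolution_of_lt hik, recursionSolution_of_lt (by omega), mul_zero, mul_zero]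
  · rw [recursionSolution_of_lt (by omega), hbk, mul_zero, zero_mul]
  · obtain ⟨j, rfl⟩ := Nat.exists_eq_add_of_lt hki
    rw [recursionSolution_succ (by omega), Nat.add_sub_cancel, mul_div_assoc',
      mul_div_cancel₀ _ (hb _ hki hin), mul_comm]

namespace SolvesRecursion

variable {x : ℕ → K} {n : ℕ}

theorem eq_zero_of_lt {k : ℕ} (hx : SolvesRecursion a b x n) (hkn : k ≤ n)
    (ha : ∀ i, 1 ≤ i → i ≤ k → a i ≠ 0) (hbk : b k = 0) {i : ℕ} (hik : i < k) : x i = 0 := by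
  induction hik.le using Nat.decreasingInduction with
  | self => exact absurd hik (lt_irrefl k)
  | of_succ m hmk ih =>
    have hrhs : b (m + 1) * x (m + 1) = 0 := by
      rcases (Nat.succ_le_of_lt hmk).eq_or_lt with hm | hm
      · rw [show m + 1 = k from hm, hbk, zero_mul]
      · rw [ih hm, mul_zero]
    have hrec := hx (m + 1) (by omega) (by omega)
    rw [Nat.add_sub_cancel, hrhs] at hrec
    exact (mul_eq_zero.1 hrec).resolve_left (ha _ (by omega) (by omega))

theorem eq_mul_of_le {v : ℕ → K} {k : ℕ} (hx : SolvesRecursion a b x n)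
    (hv : SolvesRecursion a b v n) (hvk : v k = 1) (hb : ∀ i, k < i → i ≤ n → b i ≠ 0)
    {i : ℕ} (hki : k ≤ i) (hin : i ≤ n) : x i = x k * v i := by
  induction i, hki using Nat.le_induction with
  | base => rw [hvk, mul_one]
  | succ m hkm ih =>
    have hxm := hx (m + 1) (by omega) hin
    have hvm := hv (m + 1) (by omega) hin
    rw [Nat.add_sub_cancel, ih (by omega)] at hxm
    rw [Nat.add_sub_cancel] at hvm
    refine mul_left_cancel₀ (hb _ (by omega) hin) ?_
    rw [← hxm, mul_left_comm, hvm, mul_left_comm]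

end SolvesRecursion

end TwoTermRecursion

theorem stmt3_general (ℓ k : ℕ) (p : ℂ) (hk : k ≤ ℓ)
    (μ : ℕ → ℂ)
    (hμ : ∀ m : ℕ, μ m = -4 * p * ((ℓ : ℂ) - 2 * (m : ℂ)) - 4 * (m : ℂ) * ((ℓ : ℂ) - (m : ℂ) + 1))
    (hden : ∀ i : ℕ, 1 ≤ i → i ≤ ℓ - k → (ℓ : ℂ) + 1 - 2 * p - 2 * (k : ℂ) - (i : ℂ) ≠ 0)
    (v : ℕ → ℂ)
    (hv : ∀ i : ℕ, v i = if i < k then 0 else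
      ∏ m ∈ Finset.range (i - k),
        (((k : ℂ) + (m : ℂ) + 1) * ((ℓ : ℂ) + 1 - ((m : ℂ) + 1) - (k : ℂ))) /
          (((m : ℂ) + 1) * ((ℓ : ℂ) + 1 - 2 * p - 2 * (k : ℂ) - ((m : ℂ) + 1)))) :
    (∀ x : ℕ → ℂ,
      (∀ i : ℕ, 1 ≤ i → i ≤ ℓ →
        4 * (i : ℂ) * ((ℓ : ℂ) + 1 - (i : ℂ)) * x (i - 1) = (μ k - μ i) * x i) →
      (∀ i : ℕ, i < k → x i = 0) ∧ (∀ i : ℕ, i ≤ ℓ → x i = x k * v i)) ∧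
    (∀ i : ℕ, 1 ≤ i → i ≤ ℓ →
      4 * (i : ℂ) * ((ℓ : ℂ) + 1 - (i : ℂ)) * v (i - 1) = (μ k - μ i) * v i) := by
  set a : ℕ → ℂ := fun i ↦ 4 * i * (ℓ + 1 - i)
  set b : ℕ → ℂ := fun i ↦ μ k - μ i
  have h4 : (4 : ℂ) ≠ 0 := by norm_num
  have hb_eq (i : ℕ) : b i = 4 * ((i : ℂ) - k) * (ℓ + 1 - 2 * p - k - i) := by
    simp only [b, hμ]; ring
  have ha (i : ℕ) (h1 : 1 ≤ i) (hiℓ : i ≤ ℓ) : a i ≠ 0 :=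
    mul_ne_zero (mul_ne_zero h4 (by exact_mod_cast (by omega : i ≠ 0)))
      (sub_ne_zero.2 (by exact_mod_cast (by omega : ℓ + 1 ≠ i)))
  have hbk : b k = 0 := sub_self _
  have hb (i : ℕ) (hki : k < i) (hiℓ : i ≤ ℓ) : b i ≠ 0 := by
    obtain ⟨j, rfl⟩ := Nat.exists_eq_add_of_lt hki
    have hj := hden (j + 1) (by omega) (by omega)
    have hb_shift : b (k + j + 1) = 4 * ((j : ℂ) + 1) * (ℓ + 1 - 2 * p - 2 * k - (j + 1)) := by
      rw [hb_eq]; push_cast; ring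
    push_cast at hj
    rw [hb_shift]
    exact mul_ne_zero (mul_ne_zero h4 (Nat.cast_add_one_ne_zero j)) hj
  have hv_eq : v = recursionSolution a b k := by
    funext i
    rw [hv, recursionSolution]
    refine if_congr Iff.rfl rfl (prod_congr rfl fun m _ ↦ ?_)
    rw [hb_eq, ← mul_div_mul_left _ _ h4]
    simp only [a]
    push_cast
    congr 1 <;> ring
  have hvsol : SolvesRecursion a b v ℓ := hv_eq ▸ solvesRecursion_recursionSolution hbk hb
  have hvk : v k = 1 := hv_eq ▸ recursionSolution_self k
  refine ⟨fun x (hx : SolvesRecursion a b x ℓ) ↦ ?_, hvsol⟩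
  have hx_low (i : ℕ) (hik : i < k) : x i = 0 :=
    hx.eq_zero_of_lt hk (fun i h1 h2 ↦ ha i h1 (h2.trans hk)) hbk hik
  refine ⟨hx_low, fun i hiℓ ↦ ?_⟩
  rcases lt_or_ge i k with hik | hki
  · rw [hx_low i hik, hv_eq, recursionSolution_of_lt hik, mul_zero]
  · exact hx.eq_mul_of_le hvsol hvk hb hki hiℓ

/-- Eigenvectors of `L(p)` with eigenvalue `μ_k`: any solution `x` of the
recursion `4i(ℓ+1-i)x_{i-1} = (μ_k - μ_i)x_i` (for `1 ≤ i ≤ ℓ`) vanishes below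
`k` and is determined by `x_k`, being a multiple of the explicit vector `v_k`,
which itself solves the recursion. -/
theorem stmt3 (ℓ k : ℕ) (p : ℂ) (hk : k ≤ ℓ)
    (μ : ℕ → ℂ)
    (hμ : ∀ m : ℕ, μ m = -4 * p * ((ℓ : ℂ) - 2 * (m : ℂ)) - 4 * (m : ℂ) * ((ℓ : ℂ) - (m : ℂ) + 1))
    (hmax : ∀ k' : ℕ, k' ≤ ℓ → μ k' = μ k → k' ≤ k)
    (hden : ∀ i : ℕ, 1 ≤ i → i ≤ ℓ - k → (ℓ : ℂ) + 1 - 2 * p - 2 * (k : ℂ) - (i : ℂ) ≠ 0)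
    (v : ℕ → ℂ)
    (hv : ∀ i : ℕ, v i = if i < k then 0 else
      ∏ m ∈ Finset.range (i - k),
        (((k : ℂ) + (m : ℂ) + 1) * ((ℓ : ℂ) + 1 - ((m : ℂ) + 1) - (k : ℂ))) /
          (((m : ℂ) + 1) * ((ℓ : ℂ) + 1 - 2 * p - 2 * (k : ℂ) - ((m : ℂ) + 1)))) :
    (∀ x : ℕ → ℂ,
      (∀ i : ℕ, 1 ≤ i → i ≤ ℓ →
        4 * (i : ℂ) * ((ℓ : ℂ) + 1 - (i : ℂ)) * x (i - 1) = (μ k - μ i) * x i) →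
      (∀ i : ℕ, i < k → x i = 0) ∧ (∀ i : ℕ, i ≤ ℓ → x i = x k * v i)) ∧
    (∀ i : ℕ, 1 ≤ i → i ≤ ℓ →
      4 * (i : ℂ) * ((ℓ : ℂ) + 1 - (i : ℂ)) * v (i - 1) = (μ k - μ i) * v i) :=
  stmt3_general ℓ k p hk μ hμ hden v hv
end

section
/- Suppose H(t) = t^p F(t) where F(t) = ∑_{j≥0} t^j F_j is a convergent power series with values in ℂ^{ℓ+1}, F₀ ≠ 0, and H satisfies 4t²H'' - (8t²/(1-t))H' + (4t/(1-t)²)(C₀+C₁)H = λH on (0,ε) for some ε > 0. Then λ = 4p(p-1). -/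
/-!
Near `t = 0` the equation is of Euler type: after substituting `H = t^p f`, dividing by `t^p`
and clearing the denominators `(1 - t)^2`, every term except `(4 p (p - 1) - λ) f` carries a
factor `t`. The power series `f` is analytic at `0`, so letting `t → 0⁺` leaves
`(4 p (p - 1) - λ) F₀ = 0`, and `F₀ ≠ 0` gives the indicial equation `λ = 4 p (p - 1)`.
-/

open Set Filter Topology
open scoped ENNReal

namespace FormalMultilinearSeries

variable {𝕜 E : Type*} [NontriviallyNormedField 𝕜] [NormedAddCommGroup E] [NormedSpace 𝕜 E]

variable (𝕜) in
def ofCoeffs (F : ℕ → E) : FormalMultilinearSeries 𝕜 𝕜 E :=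
  fun n => ContinuousMultilinearMap.mkPiRing 𝕜 (Fin n) (F n)

variable {F : ℕ → E}

@[simp]
theorem coeff_ofCoeffs (n : ℕ) : (ofCoeffs 𝕜 F).coeff n = F n := by
  simp [ofCoeffs, coeff]

theorem sum_ofCoeffs_zero : (ofCoeffs 𝕜 F).sum 0 = F 0 := by
  rw [FormalMultilinearSeries.sum, tsum_eq_single 0 fun n hn => by simp [hn]]
  simp

theorem nnnorm_lt_radius_ofCoeffs {z w : 𝕜} (hz : Summable fun n => z ^ n • F n)
    (hw : ‖w‖ < ‖z‖) : (‖w‖₊ : ℝ≥0∞) < (ofCoeffs 𝕜 F).radius := by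
  refine lt_of_lt_of_le (ENNReal.coe_lt_coe.2 (show ‖w‖₊ < ‖z‖₊ from hw))
    (le_radius_of_tendsto _ (l := 0) ?_)
  simpa [norm_smul, mul_comm] using hz.tendsto_atTop_zero.norm

theorem hasSum_ofCoeffs [CompleteSpace E] {z : 𝕜}
    (hz : (‖z‖₊ : ℝ≥0∞) < (ofCoeffs 𝕜 F).radius) :
    HasSum (fun n => z ^ n • F n) ((ofCoeffs 𝕜 F).sum z) := by
  simpa using (ofCoeffs 𝕜 F).hasSum (mem_eball_zero_iff.2 hz)

end FormalMultilinearSeries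

variable {E : Type*} [NormedAddCommGroup E] [NormedSpace ℂ E]

theorem HasDerivAt.comp_ofReal' {f : ℂ → E} {f' : E} {t : ℝ} (hf : HasDerivAt f f' t) :
    HasDerivAt (fun s : ℝ => f s) f' t := by
  simpa [Function.comp_def] using hf.scomp t Complex.ofRealCLM.hasDerivAt

theorem HasDerivAt.ofReal_cpow_smul {f : ℂ → E} {f' : E} {t : ℝ} (p : ℂ) (ht : 0 < t)
    (hf : HasDerivAt f f' t) :
    HasDerivAt (fun s : ℝ => (s : ℂ) ^ p • f s)
      ((t : ℂ) ^ p • f' + p • (t : ℂ) ^ (p - 1) • f t) t := by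
  have hpow := ((Complex.hasStrictDerivAt_cpow_const (c := p)
    (Complex.ofReal_mem_slitPlane.2 ht)).hasDerivAt).comp_ofReal (z := t)
  convert hpow.fun_smul hf.comp_ofReal' using 1
  rw [smul_smul]

theorem Complex.mul_cpow_sub_one {x : ℂ} (hx : x ≠ 0) (p : ℂ) : x * x ^ (p - 1) = x ^ p := by
  rw [Complex.cpow_sub _ _ hx, Complex.cpow_one, mul_div_cancel₀ _ hx]

section EulerForm

variable {f : ℂ → E} {t : ℝ}

theorem ofReal_smul_deriv_ofReal_cpow_smul (p : ℂ) (ht : 0 < t) (hf : DifferentiableAt ℂ f t) :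
    (t : ℂ) • deriv (fun s : ℝ => (s : ℂ) ^ p • f s) t
      = (t : ℂ) ^ p • ((t : ℂ) • deriv f t + p • f t) := by
  rw [(hf.hasDerivAt.ofReal_cpow_smul p ht).deriv]
  have e := Complex.mul_cpow_sub_one (Complex.ofReal_ne_zero.2 ht.ne') p
  match_scalars
  · ring
  · linear_combination p * e

theorem ofReal_sq_smul_deriv_deriv_ofReal_cpow_smul [CompleteSpace E] (p : ℂ) (ht : 0 < t)
    (hf : AnalyticAt ℂ f t) :
    (t : ℂ) ^ 2 • deriv (deriv fun s : ℝ => (s : ℂ) ^ p • f s) t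
      = (t : ℂ) ^ p • ((t : ℂ) ^ 2 • deriv (deriv f) t + (2 * p * t) • deriv f t
          + (p * (p - 1)) • f t) := by
  have hnear : ∀ᶠ s : ℝ in 𝓝 t, 0 < s ∧ AnalyticAt ℂ f s :=
    (eventually_gt_nhds ht).and
      (Complex.continuous_ofReal.continuousAt.eventually hf.eventually_analyticAt)
  have hderiv : deriv (fun s : ℝ => (s : ℂ) ^ p • f s) =ᶠ[𝓝 t]
      fun s : ℝ => (s : ℂ) ^ p • deriv f s + p • (s : ℂ) ^ (p - 1) • f s :=
    hnear.mono fun s ⟨hs, hfs⟩ => (hfs.differentiableAt.hasDerivAt.ofReal_cpow_smul p hs).deriv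
  have hderiv' := (hf.deriv.differentiableAt.hasDerivAt.ofReal_cpow_smul p ht).fun_add
    ((hf.differentiableAt.hasDerivAt.ofReal_cpow_smul (p - 1) ht).fun_const_smul p)
  rw [hderiv.deriv_eq, hderiv'.deriv]
  have e1 := Complex.mul_cpow_sub_one (Complex.ofReal_ne_zero.2 ht.ne') p
  have e2 := Complex.mul_cpow_sub_one (Complex.ofReal_ne_zero.2 ht.ne') (p - 1)
  match_scalars
  · ring
  · linear_combination (2 * p * t) * e1
  · linear_combination (p * (p - 1) * t) * e2 + p * (p - 1) * e1

end EulerForm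

/-- For `H = t^p f`, this is `(1 - t)^2 t^{-p}` times the difference of the two sides of
`4t²H'' - (8t²/(1-t))H' + (4t/(1-t)²) A H = λ H`. -/
noncomputable def eulerResidual (A : E →L[ℂ] E) (p lam : ℂ) (f : ℂ → E) (z : ℂ) : E :=
  (1 - z) ^ 2 • ((4 : ℂ) • (z ^ 2 • deriv (deriv f) z + (2 * p * z) • deriv f z
      + (p * (p - 1)) • f z) - lam • f z)
    - (8 * z * (1 - z)) • (z • deriv f z + p • f z) + (4 * z) • A (f z)

section EulerResidual

variable (A : E →L[ℂ] E) (p lam : ℂ) {f : ℂ → E}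

theorem eulerResidual_zero : eulerResidual A p lam f 0 = (4 * p * (p - 1) - lam) • f 0 := by
  simp only [eulerResidual]
  module

variable [CompleteSpace E]

theorem continuousAt_eulerResidual {z : ℂ} (hf : AnalyticAt ℂ f z) :
    ContinuousAt (eulerResidual A p lam f) z := by
  have := hf.continuousAt
  have := hf.deriv.continuousAt
  have := hf.deriv.deriv.continuousAt
  unfold eulerResidual
  fun_prop

theorem eulerResidual_eq_zero {H : ℝ → E} {t : ℝ} (ht : 0 < t) (ht1 : t ≠ 1)
    (hf : AnalyticAt ℂ f t) (hH : H =ᶠ[𝓝 t] fun s : ℝ => (s : ℂ) ^ p • f s)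
    (hode : (4 * (t : ℂ) ^ 2) • deriv (deriv H) t - (8 * (t : ℂ) ^ 2 / (1 - (t : ℂ))) • deriv H t
        + (4 * (t : ℂ) / (1 - (t : ℂ)) ^ 2) • A (H t) = lam • H t) :
    eulerResidual A p lam f t = 0 := by
  have ht0 : (t : ℂ) ≠ 0 := by exact_mod_cast ht.ne'
  have hne : 1 - (t : ℂ) ≠ 0 := sub_ne_zero.2 (by exact_mod_cast ht1.symm)
  have htp : (t : ℂ) ^ p ≠ 0 := by simp [Complex.cpow_eq_zero_iff, ht0]
  have e1 := ofReal_smul_deriv_ofReal_cpow_smul p ht hf.differentiableAt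
  have e2 := ofReal_sq_smul_deriv_deriv_ofReal_cpow_smul p ht hf
  rw [← hH.deriv_eq, ← eq_inv_smul_iff₀ ht0] at e1
  rw [← hH.deriv.deriv_eq, ← eq_inv_smul_iff₀ (pow_ne_zero 2 ht0)] at e2
  refine (smul_eq_zero.1 ?_).resolve_left htp
  calc (t : ℂ) ^ p • eulerResidual A p lam f t
      = (1 - (t : ℂ)) ^ 2 • ((4 * (t : ℂ) ^ 2) • deriv (deriv H) t
        - (8 * (t : ℂ) ^ 2 / (1 - (t : ℂ))) • deriv H t
        + (4 * (t : ℂ) / (1 - (t : ℂ)) ^ 2) • A (H t) - lam • H t) := by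
        rw [e1, e2, hH.eq_of_nhds, map_smul, eulerResidual]
        match_scalars <;> field_simp
        ring
    _ = 0 := by rw [hode, sub_self, smul_zero]

end EulerResidual

open FormalMultilinearSeries in
theorem indicial_eq_of_frobenius_solution [CompleteSpace E] (A : E →L[ℂ] E) (p lam : ℂ)
    {ε : ℝ} (hε : 0 < ε) {F : ℕ → E} (hF0 : F 0 ≠ 0) {H S : ℝ → E}
    (hS : ∀ t ∈ Ioo (0 : ℝ) ε, HasSum (fun j : ℕ => ((t : ℂ) ^ j) • F j) (S t))
    (hH : ∀ t ∈ Ioo (0 : ℝ) ε, H t = ((t : ℂ) ^ p) • S t)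
    (hode : ∀ t ∈ Ioo (0 : ℝ) ε,
      (4 * (t : ℂ) ^ 2) • deriv (deriv H) t - (8 * (t : ℂ) ^ 2 / (1 - (t : ℂ))) • deriv H t
        + (4 * (t : ℂ) / (1 - (t : ℂ)) ^ 2) • A (H t) = lam • H t) :
    lam = 4 * p * (p - 1) := by
  set f := (ofCoeffs ℂ F).sum
  obtain ⟨r, hr, hrε, hr1⟩ : ∃ r : ℝ, 0 < r ∧ r < ε ∧ r < 1 :=
    ⟨min ε 1 / 2, by positivity, by linarith [min_le_left ε 1], by linarith [min_le_right ε 1]⟩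
  have hlt : ∀ t ∈ Ico 0 r, (‖(t : ℂ)‖₊ : ℝ≥0∞) < (ofCoeffs ℂ F).radius := fun t ht =>
    nnnorm_lt_radius_ofCoeffs (hS r ⟨hr, hrε⟩).summable
      (by simpa [abs_of_nonneg ht.1, abs_of_pos hr] using ht.2)
  have hf : ∀ t ∈ Ico 0 r, AnalyticAt ℂ f t := fun t ht =>
    (ofCoeffs ℂ F).analyticOnNhd _ (mem_eball_zero_iff.2 (hlt t ht))
  have hHf : ∀ t ∈ Ioo 0 r, H t = (t : ℂ) ^ p • f t := fun t ht => by
    rw [hH t ⟨ht.1, ht.2.trans hrε⟩,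
      (hS t ⟨ht.1, ht.2.trans hrε⟩).unique (hasSum_ofCoeffs (hlt t (Ioo_subset_Ico_self ht)))]
  have hres : ∀ t ∈ Ioo 0 r, eulerResidual A p lam f t = 0 := fun t ht =>
    eulerResidual_eq_zero A p lam ht.1 (ht.2.trans hr1).ne (hf t (Ioo_subset_Ico_self ht))
      (eventuallyEq_of_mem (Ioo_mem_nhds ht.1 ht.2) hHf) (hode t ⟨ht.1, ht.2.trans hrε⟩)
  have hres0 : eulerResidual A p lam f 0 = 0 := by
    have hf0 : AnalyticAt ℂ f 0 := by simpa using hf 0 ⟨le_rfl, hr⟩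
    have hcont := (continuousAt_eulerResidual A p lam hf0).comp_of_eq
      Complex.continuous_ofReal.continuousAt Complex.ofReal_zero
    refine tendsto_nhds_unique (l := 𝓝[>] (0 : ℝ)) (hcont.tendsto.mono_left nhdsWithin_le_nhds)
      (tendsto_const_nhds.congr' ?_)
    exact eventuallyEq_of_mem (Ioo_mem_nhdsGT hr) fun t ht => (hres t ht).symm
  rw [eulerResidual_zero, show f 0 = F 0 from sum_ofCoeffs_zero, smul_eq_zero] at hres0
  exact (sub_eq_zero.1 (hres0.resolve_right hF0)).symm

theorem stmt4_general (ℓ : ℕ) (p lam : ℂ) (ε : ℝ) (hε : 0 < ε)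
    (C₀ C₁ : Matrix (Fin (ℓ + 1)) (Fin (ℓ + 1)) ℂ)
    (F : ℕ → Fin (ℓ + 1) → ℂ) (hF0 : F 0 ≠ 0)
    (H S : ℝ → Fin (ℓ + 1) → ℂ)
    (hS : ∀ t ∈ Ioo (0 : ℝ) ε, HasSum (fun j : ℕ => ((t : ℂ) ^ j) • F j) (S t))
    (hH : ∀ t ∈ Ioo (0 : ℝ) ε, H t = ((t : ℂ) ^ p) • S t)
    (hode : ∀ t ∈ Ioo (0 : ℝ) ε,
      (4 * (t : ℂ) ^ 2) • deriv (deriv H) t - (8 * (t : ℂ) ^ 2 / (1 - (t : ℂ))) • deriv H t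
        + (4 * (t : ℂ) / (1 - (t : ℂ)) ^ 2) • (C₀ + C₁).mulVec (H t) = lam • H t) :
    lam = 4 * p * (p - 1) :=
  indicial_eq_of_frobenius_solution (Matrix.toLin' (C₀ + C₁)).toContinuousLinearMap p lam hε hF0
    hS hH hode

/-- If `H(t) = t^p F(t)` with `F(t) = ∑_j t^j F_j` a convergent power series
with values in `ℂ^{ℓ+1}` and `F₀ ≠ 0`, and `H` satisfies
`4t²H'' - (8t²/(1-t))H' + (4t/(1-t)²)(C₀+C₁)H = λH` on `(0,ε)`, then
`λ = 4p(p-1)`. -/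
theorem stmt4 (ℓ : ℕ) (p lam : ℂ) (ε : ℝ) (hε : 0 < ε)
    (C₀ C₁ : Matrix (Fin (ℓ + 1)) (Fin (ℓ + 1)) ℂ)
    (hC₀ : ∀ i k : Fin (ℓ + 1), C₀ i k =
      if (k : ℕ) + 1 = (i : ℕ) then ((i : ℕ) : ℂ) * ((ℓ : ℂ) - ((i : ℕ) : ℂ) + 1)
      else if k = i then -(((i : ℕ) : ℂ) * ((ℓ : ℂ) - ((i : ℕ) : ℂ) + 1))
      else 0)
    (hC₁ : ∀ i k : Fin (ℓ + 1), C₁ i k =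
      if (k : ℕ) = (i : ℕ) + 1 then (((i : ℕ) : ℂ) + 1) * ((ℓ : ℂ) - ((i : ℕ) : ℂ))
      else if k = i then -((((i : ℕ) : ℂ) + 1) * ((ℓ : ℂ) - ((i : ℕ) : ℂ)))
      else 0)
    (F : ℕ → Fin (ℓ + 1) → ℂ) (hF0 : F 0 ≠ 0)
    (H S : ℝ → Fin (ℓ + 1) → ℂ)
    (hS : ∀ t ∈ Ioo (0 : ℝ) ε, HasSum (fun j : ℕ => ((t : ℂ) ^ j) • F j) (S t))
    (hH : ∀ t ∈ Ioo (0 : ℝ) ε, H t = ((t : ℂ) ^ p) • S t)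
    (hode : ∀ t ∈ Ioo (0 : ℝ) ε,
      (4 * (t : ℂ) ^ 2) • deriv (deriv H) t - (8 * (t : ℂ) ^ 2 / (1 - (t : ℂ))) • deriv H t
        + (4 * (t : ℂ) / (1 - (t : ℂ)) ^ 2) • (C₀ + C₁).mulVec (H t) = lam • H t) :
    lam = 4 * p * (p - 1) :=
  stmt4_general ℓ p lam ε hε C₀ C₁ F hF0 H S hS hH hode
end

section
/- For ℓ = 1 at the point p = 1, the functions h₀(t) = -2t(log(t) - t + 1)/(t-1)² and h₁(t) = 2(t·log(t) - t + 1)/(t-1)² satisfy the coupled system 4t²h_i'' - (8t²/(1-t))h_i' + (4t/(1-t)²)(h_{1-i} - h_i) = 0 for i = 0,1 on (0,1), and lim_{t→1⁻} h_i(t) = 1 for i = 0,1. -/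
/-!
Both functions are explicit, so the system is a direct computation once one notices that
`h₀ + h₁ = 2`: the two equations are then negatives of each other, and it suffices to
differentiate `h₀` twice. The limit `h₀ → 1` follows from `(log t - t + 1)/(t - 1)² → -1/2`
by l'Hôpital's rule.
-/

open Set Filter Topology Real

theorem Set.EqOn.deriv_deriv_of_hasDerivAt {𝕜 F : Type*} [NontriviallyNormedField 𝕜]
    [NormedAddCommGroup F] [NormedSpace 𝕜 F] {f g g' g'' : 𝕜 → F} {s : Set 𝕜}
    (hfg : EqOn f g s) (hs : IsOpen s) (hg : ∀ t ∈ s, HasDerivAt g (g' t) t)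
    (hg' : ∀ t ∈ s, HasDerivAt g' (g'' t) t) :
    EqOn (_root_.deriv f) g' s ∧ EqOn (_root_.deriv (_root_.deriv f)) g'' s := by
  have hd : EqOn (_root_.deriv f) g' s := fun t ht => (hfg.deriv hs ht).trans (hg t ht).deriv
  exact ⟨hd, fun t ht => (hd.deriv hs ht).trans (hg' t ht).deriv⟩

theorem Real.tendsto_log_sub_add_one_div_sq :
    Tendsto (fun t => (log t - t + 1) / (t - 1) ^ 2) (𝓝[≠] 1) (𝓝 (-1 / 2)) := by
  have hne : ∀ᶠ t in 𝓝[≠] (1 : ℝ), t ≠ 0 ∧ t ≠ 1 :=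
    (eventually_nhdsWithin_of_eventually_nhds (eventually_ne_nhds one_ne_zero)).and
      self_mem_nhdsWithin
  have hcont : ∀ {f : ℝ → ℝ}, ContinuousAt f 1 → Tendsto f (𝓝[≠] 1) (𝓝 (f 1)) :=
    fun hf => hf.tendsto.mono_left nhdsWithin_le_nhds
  refine HasDerivAt.lhopital_zero_nhdsNE (f' := fun t => t⁻¹ - 1) (g' := fun t => 2 * (t - 1))
    ?_ ?_ ?_ ?_ ?_ ?_
  · filter_upwards [hne] with t ht
    exact ((hasDerivAt_log ht.1).sub (hasDerivAt_id t)).add_const 1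
  · filter_upwards with t
    simpa using ((hasDerivAt_id t).sub_const 1).fun_pow 2
  · filter_upwards [hne] with t ht
    exact mul_ne_zero two_ne_zero (sub_ne_zero.mpr ht.2)
  · simpa using hcont (f := fun t => log t - t + 1) (by fun_prop (disch := norm_num))
  · convert hcont (f := fun t : ℝ => (t - 1) ^ 2) (by fun_prop) using 2
    norm_num
  · have hlim : Tendsto (fun t : ℝ => -1 / (2 * t)) (𝓝[≠] 1) (𝓝 (-1 / 2)) := by
      simpa using hcont (f := fun t : ℝ => -1 / (2 * t)) (by fun_prop (disch := norm_num))
    refine hlim.congr' ?_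
    filter_upwards [hne] with t ht
    have : t - 1 ≠ 0 := sub_ne_zero.mpr ht.2
    field_simp [ht.1]
    ring

namespace SphericalFunctionOne

noncomputable def H₀ (t : ℝ) : ℝ := -2 * t * (log t - t + 1) / (t - 1) ^ 2

noncomputable def H₀' (t : ℝ) : ℝ := (2 * (t + 1) * log t - 4 * (t - 1)) / (t - 1) ^ 3

noncomputable def H₀'' (t : ℝ) : ℝ :=
  (2 * (t - 1) * (5 * t + 1) - 4 * t * (t + 2) * log t) / (t * (t - 1) ^ 4)

variable {t : ℝ}

theorem two_sub_H₀ (ht₁ : t ≠ 1) : 2 - H₀ t = 2 * (t * log t - t + 1) / (t - 1) ^ 2 := by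
  have : t - 1 ≠ 0 := sub_ne_zero.mpr ht₁
  unfold H₀
  field_simp
  ring

theorem hasDerivAt_H₀ (ht₀ : t ≠ 0) (ht₁ : t ≠ 1) : HasDerivAt H₀ (H₀' t) t := by
  have : t - 1 ≠ 0 := sub_ne_zero.mpr ht₁
  have hnum : HasDerivAt (fun t => -2 * t * (log t - t + 1))
      (-2 * (log t - t + 1) + -2 * t * (t⁻¹ - 1)) t :=
    ((hasDerivAt_id t).const_mul (-2)).mul
      (((hasDerivAt_log ht₀).sub (hasDerivAt_id t)).add_const 1) |>.congr_deriv (by simp)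
  have hden : HasDerivAt (fun t => (t - 1) ^ 2) (2 * (t - 1)) t := by
    simpa using ((hasDerivAt_id t).sub_const 1).fun_pow 2
  refine (hnum.div hden (pow_ne_zero 2 this)).congr_deriv ?_
  unfold H₀'
  field_simp
  ring

theorem hasDerivAt_H₀' (ht₀ : t ≠ 0) (ht₁ : t ≠ 1) : HasDerivAt H₀' (H₀'' t) t := by
  have : t - 1 ≠ 0 := sub_ne_zero.mpr ht₁
  have hnum : HasDerivAt (fun t => 2 * (t + 1) * log t - 4 * (t - 1))
      (2 * log t + 2 * (t + 1) * t⁻¹ - 4 * 1) t :=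
    ((((hasDerivAt_id t).add_const 1).const_mul 2).mul (hasDerivAt_log ht₀)).sub
      (((hasDerivAt_id t).sub_const 1).const_mul 4) |>.congr_deriv (by simp)
  have hden : HasDerivAt (fun t => (t - 1) ^ 3) (3 * (t - 1) ^ 2) t := by
    simpa using ((hasDerivAt_id t).sub_const 1).fun_pow 3
  refine (hnum.div hden (pow_ne_zero 3 this)).congr_deriv ?_
  unfold H₀''
  field_simp
  ring

theorem H₀_ode (ht₁ : t ≠ 1) :
    4 * t ^ 2 * H₀'' t - (8 * t ^ 2 / (1 - t)) * H₀' t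
      + (4 * t / (1 - t) ^ 2) * ((2 - H₀ t) - H₀ t) = 0 := by
  have : t - 1 ≠ 0 := sub_ne_zero.mpr ht₁
  have : 1 - t ≠ 0 := sub_ne_zero.mpr ht₁.symm
  unfold H₀ H₀' H₀''
  field_simp
  ring

theorem tendsto_H₀ : Tendsto H₀ (𝓝[≠] 1) (𝓝 1) := by
  have h := ((tendsto_id.mono_left nhdsWithin_le_nhds).const_mul (-2)).mul
    tendsto_log_sub_add_one_div_sq
  norm_num at h
  exact h.congr fun t => by unfold H₀; ring

end SphericalFunctionOne

open SphericalFunctionOne in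
/-- For `ℓ = 1`, `p = 1`: `h₀(t) = -2t(log t - t + 1)/(t-1)²` and
`h₁(t) = 2(t log t - t + 1)/(t-1)²` satisfy the coupled system
`4t²hᵢ'' - (8t²/(1-t))hᵢ' + (4t/(1-t)²)(h_{1-i} - hᵢ) = 0` on `(0,1)`, and
both tend to `1` as `t → 1⁻`. -/
theorem stmt11 (h₀ h₁ : ℝ → ℝ)
    (hh₀ : ∀ t ∈ Ioo (0 : ℝ) 1, h₀ t = -2 * t * (Real.log t - t + 1) / (t - 1) ^ 2)
    (hh₁ : ∀ t ∈ Ioo (0 : ℝ) 1, h₁ t = 2 * (t * Real.log t - t + 1) / (t - 1) ^ 2) :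
    (∀ t ∈ Ioo (0 : ℝ) 1,
      4 * t ^ 2 * deriv (deriv h₀) t - (8 * t ^ 2 / (1 - t)) * deriv h₀ t
        + (4 * t / (1 - t) ^ 2) * (h₁ t - h₀ t) = 0) ∧
    (∀ t ∈ Ioo (0 : ℝ) 1,
      4 * t ^ 2 * deriv (deriv h₁) t - (8 * t ^ 2 / (1 - t)) * deriv h₁ t
        + (4 * t / (1 - t) ^ 2) * (h₀ t - h₁ t) = 0) ∧
    Tendsto h₀ (nhdsWithin 1 (Iio 1)) (nhds 1) ∧
    Tendsto h₁ (nhdsWithin 1 (Iio 1)) (nhds 1) := by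
  have e₀ : EqOn h₀ H₀ (Ioo 0 1) := hh₀
  have e₁ : EqOn h₁ (fun t => 2 - H₀ t) (Ioo 0 1) := fun t ht =>
    (hh₁ t ht).trans (two_sub_H₀ ht.2.ne).symm
  obtain ⟨d₀, dd₀⟩ := e₀.deriv_deriv_of_hasDerivAt isOpen_Ioo
    (fun t ht => hasDerivAt_H₀ ht.1.ne' ht.2.ne) (fun t ht => hasDerivAt_H₀' ht.1.ne' ht.2.ne)
  obtain ⟨d₁, dd₁⟩ := e₁.deriv_deriv_of_hasDerivAt isOpen_Ioo
    (fun t ht => (hasDerivAt_H₀ ht.1.ne' ht.2.ne).const_sub 2)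
    (fun t ht => (hasDerivAt_H₀' ht.1.ne' ht.2.ne).neg)
  have hU : Ioo (0 : ℝ) 1 ∈ 𝓝[<] 1 := Ioo_mem_nhdsLT (by norm_num)
  have lim₀ : Tendsto H₀ (𝓝[<] 1) (𝓝 1) :=
    tendsto_H₀.mono_left (nhdsWithin_mono _ fun t ht => ht.ne)
  refine ⟨fun t ht => ?_, fun t ht => ?_, lim₀.congr' (eventuallyEq_of_mem hU e₀.symm), ?_⟩
  · rw [dd₀ ht, d₀ ht, e₀ ht, e₁ ht]
    exact H₀_ode ht.2.ne
  · rw [dd₁ ht, d₁ ht, e₀ ht, e₁ ht]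
    linear_combination -H₀_ode ht.2.ne
  · refine Tendsto.congr' (eventuallyEq_of_mem hU e₁.symm) ?_
    convert lim₀.const_sub 2 using 2
    norm_num
end
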